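/- Let (L, ν) be a finite measure space, let A < B in [−∞, ∞], let n ≥ 2 be an integer, and let Ψ_S, Ψ_V, g : (A,B) → (0,∞) be continuous. Fix r₀ ∈ (A,B) and define s(r) = ∫_{r₀}^{r} Ψ_V(t) g(t)^{n−1} dt (assumed finite for all r ∈ (A,B)). Assume there exists a convex function F on the interval s((A,B)) such that Ψ_S(r) g(r)^{n−1} = F(s(r)) for all r ∈ (A,B). Then for every measurable u : L → (A,B) such that s ∘ u is ν-integrable and ∫_L s(u(l)) dν(l) = 0, one has ∫_L Ψ_S(u(l)) g(u(l))^{n−1} dν(l) ≥ Ψ_S(r₀) g(r₀)^{n−1} ν(L). -/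

import Mathlib

/-!
Since the integrand `Ψ_V g^{n-1}` is positive, `s` is strictly increasing, so `0 = s r₀` lies in
the interior of the convex set `s '' I`. There `F` has a supporting line `F 0 + c x`; applying it
at `x = s (u l)` and integrating against `ν`, the linear term drops out because `s ∘ u` has
integral `0`.
-/

open MeasureTheory Set

lemma ofReal_integral_le_lintegral_ofReal {α : Type*} [MeasurableSpace α]
    {μ : Measure α} (f : α → ℝ) :
    ENNReal.ofReal (∫ x, f x ∂μ) ≤ ∫⁻ x, ENNReal.ofReal (f x) ∂μ := by
  by_cases hf : Integrable f μ
  · calc ENNReal.ofReal (∫ x, f x ∂μ)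
        ≤ ENNReal.ofReal (∫ x, max (f x) 0 ∂μ) :=
          ENNReal.ofReal_le_ofReal
            (integral_mono hf hf.pos_part fun x => le_max_left _ _)
      _ = ∫⁻ x, ENNReal.ofReal (max (f x) 0) ∂μ :=
          ofReal_integral_eq_lintegral_ofReal hf.pos_part
            (ae_of_all _ fun x => le_max_right _ _)
      _ = ∫⁻ x, ENNReal.ofReal (f x) ∂μ := by simp [ENNReal.ofReal_max]
  · simp [integral_undef hf]

lemma Convex.mem_interior_of_lt {K : Set ℝ} (hK : Convex ℝ K) {a b x : ℝ} (ha : a ∈ K)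
    (hb : b ∈ K) (hax : a < x) (hxb : x < b) : x ∈ interior K :=
  interior_mono (Ioo_subset_Icc_self.trans (hK.ordConnected.out ha hb))
    (by rw [interior_Ioo]; exact ⟨hax, hxb⟩)

lemma strictMonoOn_intervalIntegral_of_pos {I : Set ℝ} (hI : I.OrdConnected) {f : ℝ → ℝ}
    (hf : ∀ x ∈ I, 0 < f x) {r₀ : ℝ} (hint : ∀ r ∈ I, IntervalIntegrable f volume r₀ r) :
    StrictMonoOn (fun r => ∫ t in r₀..r, f t) I := by
  intro a ha b hb hab
  have hint_ab : IntervalIntegrable f volume a b := (hint a ha).symm.trans (hint b hb)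
  have hpos : 0 < ∫ t in a..b, f t :=
    intervalIntegral.intervalIntegral_pos_of_pos_on hint_ab
      (fun x hx => hf x (hI.out ha hb (Ioo_subset_Icc_self hx))) hab
  simp only [← intervalIntegral.integral_add_adjacent_intervals (hint a ha) hint_ab]
  linarith

lemma ConvexOn.add_rightDeriv_mul_sub_le {S : Set ℝ} {f : ℝ → ℝ} {x y : ℝ}
    (hf : ConvexOn ℝ S f) (hx : x ∈ interior S) (hy : y ∈ S) :
    f x + derivWithin f (Ioi x) x * (y - x) ≤ f y := by
  rcases lt_trichotomy y x with hyx | rfl | hxy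
  · have hslope : slope f y x ≤ derivWithin f (Ioi x) x :=
      (hf.slope_le_leftDeriv_of_mem_interior hy hx hyx).trans
        (hf.leftDeriv_le_rightDeriv_of_mem_interior hx)
    rw [slope_def_field, div_le_iff₀ (sub_pos.2 hyx)] at hslope
    linarith
  · simp
  · have hslope := hf.rightDeriv_le_slope_of_mem_interior hx hy hxy
    rw [slope_def_field, le_div_iff₀ (sub_pos.2 hxy)] at hslope
    linarith

/-- Jensen's inequality, stated with a lower Lebesgue integral so that `F ∘ φ` need not be
integrable. -/
lemma ConvexOn.ofReal_mul_measure_univ_le_lintegral {α : Type*} [MeasurableSpace α]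
    {μ : Measure α} [IsFiniteMeasure μ] {K : Set ℝ} {F : ℝ → ℝ} (hF : ConvexOn ℝ K F)
    {m : ℝ} (hm : m ∈ interior K) {φ : α → ℝ} (hφK : ∀ x, φ x ∈ K) (hφ : Integrable φ μ)
    (hφm : ∫ x, φ x ∂μ = μ.real univ * m) :
    ENNReal.ofReal (F m) * μ univ ≤ ∫⁻ x, ENNReal.ofReal (F (φ x)) ∂μ := by
  set c := derivWithin F (Ioi m) m
  have hmean : ∫ x, F m + c * (φ x - m) ∂μ = μ.real univ * F m := by
    have hcentered : Integrable (fun x => φ x - m) μ := hφ.sub (integrable_const m)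
    rw [integral_add (integrable_const _) (hcentered.const_mul c), integral_const_mul,
      integral_sub hφ (integrable_const m), hφm]
    simp [mul_comm]
  calc ENNReal.ofReal (F m) * μ univ
      = ENNReal.ofReal (∫ x, F m + c * (φ x - m) ∂μ) := by
        rw [hmean, ENNReal.ofReal_mul measureReal_nonneg, ofReal_measureReal, mul_comm]
    _ ≤ ∫⁻ x, ENNReal.ofReal (F m + c * (φ x - m)) ∂μ :=
        ofReal_integral_le_lintegral_ofReal _
    _ ≤ ∫⁻ x, ENNReal.ofReal (F (φ x)) ∂μ :=
        lintegral_mono fun x =>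
          ENNReal.ofReal_le_ofReal (hF.add_rightDeriv_mul_sub_le hm (hφK x))

theorem stmt_1_general {L : Type*} [MeasurableSpace L] (ν : Measure L) [IsFiniteMeasure ν]
    (A B : EReal) (n : ℕ)
    (ΨS ΨV g : ℝ → ℝ)
    (I : Set ℝ) (hI : I = {r : ℝ | A < (r : EReal) ∧ (r : EReal) < B})
    (hΨVpos : ∀ r ∈ I, 0 < ΨV r)
    (hgpos : ∀ r ∈ I, 0 < g r)
    (r₀ : ℝ) (hr₀ : r₀ ∈ I)
    (s : ℝ → ℝ) (hs : ∀ r ∈ I, s r = ∫ t in r₀..r, ΨV t * g t ^ (n - 1))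
    (hsint : ∀ r ∈ I, IntervalIntegrable (fun t => ΨV t * g t ^ (n - 1)) volume r₀ r)
    (F : ℝ → ℝ) (hF : ConvexOn ℝ (s '' I) F)
    (hFs : ∀ r ∈ I, ΨS r * g r ^ (n - 1) = F (s r))
    (u : L → ℝ) (huI : ∀ l, u l ∈ I)
    (hsu : Integrable (fun l => s (u l)) ν)
    (hsu0 : ∫ l, s (u l) ∂ν = 0) :
    ENNReal.ofReal (ΨS r₀ * g r₀ ^ (n - 1)) * ν Set.univ ≤
      ∫⁻ l, ENNReal.ofReal (ΨS (u l) * g (u l) ^ (n - 1)) ∂ν := by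
  have hIopen : IsOpen I := hI ▸ isOpen_Ioo.preimage continuous_coe_real_ereal
  have hIconn : I.OrdConnected :=
    hI ▸ ordConnected_Ioo.preimage_mono EReal.coe_strictMono.monotone
  have hsmono : StrictMonoOn s I :=
    (strictMonoOn_intervalIntegral_of_pos hIconn
      (fun r hr => mul_pos (hΨVpos r hr) (pow_pos (hgpos r hr) _)) hsint).congr
      fun r hr => (hs r hr).symm
  have hs₀ : s r₀ = 0 := by simp [hs r₀ hr₀]
  obtain ⟨l, r, ⟨hl, hr⟩, hIoo⟩ := mem_nhds_iff_exists_Ioo_subset.1 (hIopen.mem_nhds hr₀)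
  obtain ⟨r₁, hlr₁, hr₁⟩ := exists_between hl
  obtain ⟨r₂, hr₂, hr₂r⟩ := exists_between hr
  have hr₁I : r₁ ∈ I := hIoo ⟨hlr₁, hr₁.trans hr⟩
  have hr₂I : r₂ ∈ I := hIoo ⟨hl.trans hr₂, hr₂r⟩
  have h0 : (0 : ℝ) ∈ interior (s '' I) :=
    hF.1.mem_interior_of_lt (mem_image_of_mem s hr₁I) (mem_image_of_mem s hr₂I)
      (hs₀ ▸ hsmono hr₁I hr₀ hr₁) (hs₀ ▸ hsmono hr₀ hr₂I hr₂)
  calc ENNReal.ofReal (ΨS r₀ * g r₀ ^ (n - 1)) * ν Set.univ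
      = ENNReal.ofReal (F 0) * ν Set.univ := by rw [hFs r₀ hr₀, hs₀]
    _ ≤ ∫⁻ l, ENNReal.ofReal (F (s (u l))) ∂ν :=
        hF.ofReal_mul_measure_univ_le_lintegral h0 (fun l => mem_image_of_mem s (huI l)) hsu
          (by rw [hsu0, mul_zero])
    _ = ∫⁻ l, ENNReal.ofReal (ΨS (u l) * g (u l) ^ (n - 1)) ∂ν :=
        lintegral_congr fun l => by rw [hFs _ (huI l)]

/-- In a warped product `(A,B) ×_g L` with product densities, if the
fiberwise surface-area density `Ψ_S(r) g(r)^{n-1}` is a convex function of the volume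
coordinate `s(r) = ∫_{r₀}^r Ψ_V g^{n-1}`, then for every graph `u : L → (A,B)` enclosing
net volume `0` with the fiber `{r₀} × L`, the vertical surface area of the graph is at
least the surface area of the fiber. -/
theorem stmt_1 {L : Type*} [MeasurableSpace L] (ν : Measure L) [IsFiniteMeasure ν]
    (A B : EReal) (hAB : A < B) (n : ℕ) (hn : 2 ≤ n)
    (ΨS ΨV g : ℝ → ℝ)
    (I : Set ℝ) (hI : I = {r : ℝ | A < (r : EReal) ∧ (r : EReal) < B})
    (hΨS : ContinuousOn ΨS I) (hΨSpos : ∀ r ∈ I, 0 < ΨS r)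
    (hΨV : ContinuousOn ΨV I) (hΨVpos : ∀ r ∈ I, 0 < ΨV r)
    (hg : ContinuousOn g I) (hgpos : ∀ r ∈ I, 0 < g r)
    (r₀ : ℝ) (hr₀ : r₀ ∈ I)
    (s : ℝ → ℝ) (hs : ∀ r ∈ I, s r = ∫ t in r₀..r, ΨV t * g t ^ (n - 1))
    (hsint : ∀ r ∈ I, IntervalIntegrable (fun t => ΨV t * g t ^ (n - 1)) volume r₀ r)
    (F : ℝ → ℝ) (hF : ConvexOn ℝ (s '' I) F)
    (hFs : ∀ r ∈ I, ΨS r * g r ^ (n - 1) = F (s r))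
    (u : L → ℝ) (hu : Measurable u) (huI : ∀ l, u l ∈ I)
    (hsu : Integrable (fun l => s (u l)) ν)
    (hsu0 : ∫ l, s (u l) ∂ν = 0) :
    ENNReal.ofReal (ΨS r₀ * g r₀ ^ (n - 1)) * ν Set.univ ≤
      ∫⁻ l, ENNReal.ofReal (ΨS (u l) * g (u l) ^ (n - 1)) ∂ν :=
  stmt_1_general ν A B n ΨS ΨV g I hI hΨVpos hgpos r₀ hr₀ s hs hsint F hF hFs u huI hsu hsu0
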